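/- arXiv:1110.1946 — 2 statements merged into one kernel-verified Lean document; each statement's English description precedes it below -/
import Mathlib

section
/- Let W be a finite Coxeter group acting on V = ℂ^n with root system R_+ and Dunkl operators ∇_i with parameter c. Suppose P_1, …, P_n are polynomials with ∇_i P_j = 0 for all i, j, and suppose that for every reflection s_γ ∈ W and all i, s_γ P_i = Σ_j (s_γ)_{ji} P_j where (s_γ)_{ji} is the matrix of s_γ on V in the basis e_i (i.e., the span of the P_i is isomorphic to V via P_i ↦ e_i). Then ∂_{x^i} P_j = ∂_{x^j} P_i for all i, j, and consequently there exists a polynomial Q with ∂_{x^i} Q = P_i for all i; moreover Q is W-invariant. -/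
/-! Clearing denominators in `∇_i P_j = 0` expresses `∂_i P_j` through
`γ_i (1 - s_γ) P_j = γ_i γ_j ∑_k γ_k P_k`, which is symmetric in `i` and `j`. A closed polynomial
1-form is exact: a potential is obtained by inverting the Euler operator on `∑_i x_i P_i`.
Finally `s_γ Q` has the same gradient as `Q` by the chain rule and the same constant term,
so `s_γ Q = Q`. -/

open MvPolynomial

/-- The linear form L_γ = (γ, x) = Σ_k γ_k x^k as a polynomial. -/
noncomputable def Lform (n : ℕ) (γ : Fin n → ℂ) : MvPolynomial (Fin n) ℂ :=
  ∑ k, C (γ k) * X k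

/-- The reflection s_γ acting on polynomials: x^i ↦ x^i − γ_i (γ, x)
(roots normalized by (γ,γ) = 2). -/
noncomputable def reflPoly (n : ℕ) (γ : Fin n → ℂ) :
    MvPolynomial (Fin n) ℂ →ₐ[ℂ] MvPolynomial (Fin n) ℂ :=
  aeval fun i => X i - C (γ i) * ∑ k, C (γ k) * X k

namespace MvPolynomial

section CommSemiring

variable {R σ τ : Type*} [CommSemiring R]

theorem coeff_X_mul_pderiv (i : σ) (m : σ →₀ ℕ) (p : MvPolynomial σ R) :
    coeff m (X i * pderiv i p) = m i * coeff m p := by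
  induction p using induction_on' with
  | monomial s a =>
    classical
    rw [X_mul_pderiv_monomial, coeff_smul, coeff_monomial, nsmul_eq_mul]
    split_ifs with h
    · rw [h]
    · rw [mul_zero, mul_zero]
  | add p q hp hq => rw [map_add, mul_add, coeff_add, hp, hq, coeff_add, mul_add]

theorem coeff_sum_X_mul_pderiv [Fintype σ] (m : σ →₀ ℕ) (p : MvPolynomial σ R) :
    coeff m (∑ i, X i * pderiv i p) = m.degree * coeff m p := by
  simp only [coeff_sum, coeff_X_mul_pderiv, ← Finset.sum_mul, Finsupp.degree_eq_sum,
    Nat.cast_sum]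

theorem pderiv_aeval [Fintype σ] (g : σ → MvPolynomial τ R) (i : τ) (p : MvPolynomial σ R) :
    pderiv i (aeval g p) = ∑ j, aeval g (pderiv j p) * pderiv i (g j) := by
  classical
  induction p using induction_on with
  | C a => simp
  | add p q hp hq => simp only [map_add, hp, hq, add_mul, Finset.sum_add_distrib]
  | mul_X p j hp =>
    simp only [map_mul, aeval_X, pderiv_mul, hp, map_add, add_mul, Finset.sum_add_distrib,
      Finset.sum_mul]
    congr 1
    · exact Finset.sum_congr rfl fun k _ => by ring
    · simp [pderiv_X, Pi.single_apply]

end CommSemiring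

section Field

variable {K σ : Type*} [Field K] [CharZero K]

theorem eq_of_pderiv_eq_of_constantCoeff_eq {p q : MvPolynomial σ K}
    (h : ∀ i, pderiv i p = pderiv i q) (h0 : constantCoeff p = constantCoeff q) : p = q := by
  ext m
  rcases eq_or_ne m 0 with rfl | hm
  · exact h0
  obtain ⟨i, hi⟩ := Finsupp.ne_iff.1 hm
  have hle : Finsupp.single i 1 ≤ m := Finsupp.single_le_iff.2 (Nat.one_le_iff_ne_zero.2 hi)
  have := congrArg (coeff (m - Finsupp.single i 1)) (h i)
  rw [coeff_pderiv, coeff_pderiv, tsub_add_cancel_of_le hle] at this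
  exact mul_right_cancel₀ (Nat.cast_add_one_ne_zero _) this

/-- Inverse of the Euler operator `∑ i, X i * pderiv i` away from the constant term. -/
noncomputable def eulerInv (F : MvPolynomial σ K) : MvPolynomial σ K :=
  ∑ m ∈ F.support, monomial m (coeff m F / m.degree)

omit [CharZero K] in
theorem coeff_eulerInv (F : MvPolynomial σ K) (m : σ →₀ ℕ) :
    coeff m (eulerInv F) = coeff m F / m.degree := by
  classical
  rw [eulerInv, coeff_sum]
  simp only [coeff_monomial, Finset.sum_ite_eq', mem_support_iff, ite_not]
  split_ifs with h <;> simp [h]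

theorem exists_pderiv_eq_of_pderiv_comm [Fintype σ] (P : σ → MvPolynomial σ K)
    (hP : ∀ i j, pderiv i (P j) = pderiv j (P i)) : ∃ Q, ∀ i, pderiv i Q = P i := by
  classical
  set F := ∑ i, X i * P i
  have hF : ∀ j, pderiv j F = P j + ∑ i, X i * pderiv i (P j) := fun j => by
    simp only [F, map_sum, pderiv_mul, pderiv_X, Pi.single_apply, ite_mul, one_mul, zero_mul,
      Finset.sum_add_distrib, Finset.sum_ite_eq', Finset.mem_univ, if_true, hP j]
  refine ⟨eulerInv F, fun j => ?_⟩
  ext m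
  have key := congrArg (coeff m) (hF j)
  rw [coeff_pderiv, coeff_add, coeff_sum_X_mul_pderiv] at key
  rw [coeff_pderiv, coeff_eulerInv, map_add, Finsupp.degree_single, Nat.cast_add_one, div_mul_eq_mul_div, div_eq_iff (Nat.cast_add_one_ne_zero _), key]
  ring

end Field

end MvPolynomial

section Reflection

variable {n : ℕ}

theorem coeff_single_Lform (γ : Fin n → ℂ) (k : Fin n) :
    coeff (Finsupp.single k 1) (Lform n γ) = γ k := by
  simp [Lform, coeff_sum, coeff_C_mul, coeff_X, Finsupp.single_left_inj]

theorem Lform_ne_zero {γ : Fin n → ℂ} (hγ : γ ≠ 0) : Lform n γ ≠ 0 := fun h =>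
  hγ <| funext fun k => by simpa [coeff_single_Lform] using congrArg (coeff (Finsupp.single k 1)) h

theorem pderiv_Lform (γ : Fin n → ℂ) (i : Fin n) : pderiv i (Lform n γ) = C (γ i) := by
  simp [Lform, pderiv_X, Pi.single_apply]

theorem reflPoly_eq_aeval (γ : Fin n → ℂ) :
    reflPoly n γ = aeval fun i => X i - C (γ i) * Lform n γ :=
  rfl

theorem pderiv_reflPoly (γ : Fin n → ℂ) (i : Fin n) (p : MvPolynomial (Fin n) ℂ) :
    pderiv i (reflPoly n γ p) =
      reflPoly n γ (pderiv i p) - C (γ i) * ∑ j, C (γ j) * reflPoly n γ (pderiv j p) := by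
  rw [reflPoly_eq_aeval, pderiv_aeval]
  simp only [map_sub, pderiv_C_mul, pderiv_Lform, mul_sub, Finset.sum_sub_distrib, Finset.mul_sum]
  refine congrArg₂ (· - ·) ?_ (Finset.sum_congr rfl fun j _ => by ring)
  simp [pderiv_X, Pi.single_apply]

theorem constantCoeff_reflPoly (γ : Fin n → ℂ) (p : MvPolynomial (Fin n) ℂ) :
    constantCoeff (reflPoly n γ p) = constantCoeff p := by
  induction p using induction_on with
  | C a => simp
  | add p q hp hq => simp only [map_add, hp, hq]
  | mul_X p j hp => simp [reflPoly] at hp ⊢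

theorem reflPoly_eq_self_of_pderiv_eq {γ : Fin n → ℂ} (hγ : ∑ k, γ k * γ k = 2)
    {P : Fin n → MvPolynomial (Fin n) ℂ}
    (hP : ∀ i, reflPoly n γ (P i) = P i - C (γ i) * ∑ j, C (γ j) * P j)
    {Q : MvPolynomial (Fin n) ℂ} (hQ : ∀ i, pderiv i Q = P i) : reflPoly n γ Q = Q := by
  set S := ∑ j, C (γ j) * P j
  -- `(P j)` transforms like a vector of `V`, so pairing it with `γ` picks up `s_γ γ = -γ`.
  have hS : ∑ j, C (γ j) * reflPoly n γ (P j) = -S :=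
    calc ∑ j, C (γ j) * reflPoly n γ (P j) = S - C (∑ k, γ k * γ k) * S := by
          simp only [hP, mul_sub, Finset.sum_sub_distrib, map_sum, map_mul, Finset.sum_mul]
          exact congrArg (S - ·) (Finset.sum_congr rfl fun j _ => by ring)
      _ = -S := by rw [hγ, map_ofNat]; ring
  refine eq_of_pderiv_eq_of_constantCoeff_eq (fun i => ?_) (constantCoeff_reflPoly γ Q)
  rw [pderiv_reflPoly]
  simp only [hQ]
  rw [hS, hP]
  ring

theorem pderiv_comm_of_dunkl {c : ℂ} {R : Finset (Fin n → ℂ)} (hR : ∀ γ ∈ R, γ ≠ 0)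
    {P : Fin n → MvPolynomial (Fin n) ℂ}
    (hDunkl : ∀ i j : Fin n,
      (∏ γ ∈ R, Lform n γ) * pderiv i (P j) =
        C c * ∑ γ ∈ R, C (γ i) * (P j - reflPoly n γ (P j)) *
          ∏ γ' ∈ R.erase γ, Lform n γ')
    (hEquiv : ∀ γ ∈ R, ∀ i : Fin n,
      reflPoly n γ (P i) = P i - C (γ i) * ∑ j, C (γ j) * P j)
    (i j : Fin n) : pderiv i (P j) = pderiv j (P i) := by
  refine mul_left_cancel₀ (Finset.prod_ne_zero_iff.2 fun γ hγ => Lform_ne_zero (hR γ hγ)) ?_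
  rw [hDunkl, hDunkl]
  refine congrArg (C c * ·) (Finset.sum_congr rfl fun γ hγ => ?_)
  rw [hEquiv γ hγ i, hEquiv γ hγ j]
  ring

end Reflection

/-- If ∇_i P_j = 0 for all i,j (stated with denominators cleared) and the span of the
P_i is a copy of the reflection representation (s_γ P_i = P_i − γ_i Σ_j γ_j P_j), then
∂_i P_j = ∂_j P_i, and there is a W-invariant polynomial Q with ∂_i Q = P_i. -/
theorem stmt5 (n : ℕ) (c : ℂ) (R : Finset (Fin n → ℂ))
    (hnorm : ∀ γ ∈ R, ∑ k, γ k * γ k = 2)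
    (P : Fin n → MvPolynomial (Fin n) ℂ)
    (hDunkl : ∀ i j : Fin n,
      (∏ γ ∈ R, Lform n γ) * pderiv i (P j) =
        C c * ∑ γ ∈ R, C (γ i) * (P j - reflPoly n γ (P j)) *
          ∏ γ' ∈ R.erase γ, Lform n γ')
    (hEquiv : ∀ γ ∈ R, ∀ i : Fin n,
      reflPoly n γ (P i) = P i - C (γ i) * ∑ j, C (γ j) * P j) :
    (∀ i j : Fin n, pderiv i (P j) = pderiv j (P i)) ∧
    ∃ Q : MvPolynomial (Fin n) ℂ,
      (∀ i, pderiv i Q = P i) ∧ ∀ γ ∈ R, reflPoly n γ Q = Q := by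
  have hR : ∀ γ ∈ R, γ ≠ 0 := fun γ hγ h0 => by simpa [h0] using hnorm γ hγ
  have hcomm := pderiv_comm_of_dunkl hR hDunkl hEquiv
  obtain ⟨Q, hQ⟩ := exists_pderiv_eq_of_pderiv_comm P hcomm
  exact ⟨hcomm, Q, hQ, fun γ hγ => reflPoly_eq_self_of_pderiv_eq (hnorm γ hγ) (hEquiv γ hγ) hQ⟩
end

section
/- Let ℓ ≥ 2, ω a primitive ℓ-th root of unity, 1 ≤ q ≤ ℓ−1, and let f_1,…,f_n be the polynomials f_j = (−1)^m Σ_{k_1+⋯+k_n=m} C(ν−1,k_j) x_j^{ℓ(m−k_j)+s} ∏_{i≠j} C(ν,k_i) x_i^{ℓ(m−k_i)+ℓ−q+s} with ν = m + (ℓ−q+s)/ℓ, m,s ∈ ℤ_{≥0}. Then under the generators of G(ℓ,1,n) = S_n ⋉ (ℤ/ℓℤ)^n: the reflection σ_{ij}^{(a)} (which sends x_i ↦ ω^a x_j, x_j ↦ ω^{−a} x_i, fixing other variables) acts by σ_{ij}^{(a)} f_i = ω^{a q} f_j, σ_{ij}^{(a)} f_j = ω^{−a q} f_i, σ_{ij}^{(a)}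 f_k = f_k (k ≠ i,j); and s_i (which sends x_i ↦ ω⁻¹ x_i in the polynomial action, i.e. (s_i f)(x) = f(s_i^{−1} x)) acts by s_i f_i = ω^{−s} f_i and s_i f_k = ω^{q−s} f_k for k ≠ i. -/
open MvPolynomial

/-- Generalized binomial coefficient C(α,k) = α(α−1)⋯(α−k+1)/k!. -/
noncomputable def cbinom (α : ℂ) (k : ℕ) : ℂ :=
  (∏ i ∈ Finset.range k, (α - i)) / (k.factorial : ℂ)

/-- The residue polynomial f_j for G(ℓ,1,n), ν = m + (ℓ−q+s)/ℓ. -/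
noncomputable def fjPoly (ℓ n m s q : ℕ) (j : Fin n) : MvPolynomial (Fin n) ℂ :=
  ∑ k ∈ (Fintype.piFinset fun _ : Fin n => Finset.range (m + 1)).filter
      (fun k => ∑ i, k i = m),
    MvPolynomial.monomial
      (Finsupp.equivFunOnFinite.symm fun i =>
        if i = j then ℓ * (m - k i) + s else ℓ * (m - k i) + (ℓ - q) + s)
      ((-1 : ℂ) ^ m * cbinom (((m : ℂ) + ((ℓ : ℂ) - q + s) / ℓ) - 1) (k j) *
        ∏ i ∈ Finset.univ.erase j, cbinom ((m : ℂ) + ((ℓ : ℂ) - q + s) / ℓ) (k i))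

/-!
Every monomial of `f_t` has exponent `ℓ·(m − k_l) + r_l` in `x_l`, where the residue
`r_l = fjResidue ℓ s q t l` is `s` for `l = t` and `ℓ − q + s` otherwise. A diagonal substitution
`x_l ↦ u_l x_l` with `u_l ^ ℓ = 1` therefore multiplies every monomial of `f_t` by the same scalar
`∏ u_l ^ r_l`, so `f_t` is an eigenvector. Permuting the variables permutes the `f_t` along, since
the index set (compositions of `m`) and the coefficients are symmetric. Each generator of
`G(ℓ,1,n)` is a permutation followed by a diagonal substitution, and its eigenvalue is read off
from the one or two nontrivial scalars.
-/

theorem MvPolynomial.aeval_C_mul_X_monomial {R σ : Type*} [CommSemiring R] (u : σ → R)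
    (d : σ →₀ ℕ) (c : R) :
    aeval (fun l => C (u l) * X l) (monomial d c)
      = monomial d (c * d.prod fun l e => u l ^ e) := by
  rw [aeval_monomial, monomial_eq, C_mul, map_finsuppProd, mul_assoc, algebraMap_eq]
  simp only [mul_pow, ← C_pow, Finsupp.prod_mul]

theorem Finsupp.mapDomain_equivFunOnFinite_symm {α β M : Type*} [Finite α] [Finite β]
    [AddCommMonoid M] (π : α ≃ β) (e : α → M) :
    (equivFunOnFinite.symm e).mapDomain π = equivFunOnFinite.symm (e ∘ π.symm) := by
  ext b
  simp [mapDomain_equiv_apply]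

theorem rename_fjPoly (ℓ n m s q : ℕ) (π : Equiv.Perm (Fin n)) (t : Fin n) :
    rename π (fjPoly ℓ n m s q t) = fjPoly ℓ n m s q (π t) := by
  rw [fjPoly, fjPoly, map_sum]
  refine Finset.sum_equiv (π.arrowCongr (Equiv.refl ℕ)) (fun k => ?_) (fun k _ => ?_)
  · simp only [Finset.mem_filter, Fintype.mem_piFinset, Equiv.arrowCongr_apply,
      Equiv.coe_refl, Function.comp_apply, id_eq, Equiv.sum_comp π.symm k]
    exact and_congr_left' π.symm.forall_congr_right.symm
  · rw [rename_monomial, Finsupp.mapDomain_equivFunOnFinite_symm]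
    congr 1
    · congr 2
      funext l
      simp [Equiv.symm_apply_eq]
    · simp only [Equiv.arrowCongr_apply, Equiv.coe_refl, Function.comp_apply,
        Equiv.symm_apply_apply]
      congr 1
      exact Finset.prod_equiv π (by simp) (by simp)

def fjResidue (ℓ s q : ℕ) {n : ℕ} (t l : Fin n) : ℕ :=
  if l = t then s else ℓ - q + s

theorem aeval_C_mul_X_fjPoly (ℓ n m s q : ℕ) (u : Fin n → ℂ) (hu : ∀ l, u l ^ ℓ = 1)
    (t : Fin n) :
    aeval (fun l => C (u l) * X l) (fjPoly ℓ n m s q t)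
      = C (∏ l, u l ^ fjResidue ℓ s q t l) * fjPoly ℓ n m s q t := by
  have hpow : ∀ l A r, u l ^ (ℓ * A + r) = u l ^ r := fun l A r => by
    rw [pow_add, pow_mul, hu, one_pow, one_mul]
  rw [fjPoly, map_sum, Finset.mul_sum]
  refine Finset.sum_congr rfl fun k _ => ?_
  rw [aeval_C_mul_X_monomial, C_mul_monomial, mul_comm, Finsupp.prod_fintype _ _ (by simp)]
  congr 2
  refine Fintype.prod_congr _ _ fun l => ?_
  simp only [Finsupp.coe_equivFunOnFinite_symm, fjResidue]
  split_ifs <;> simp only [add_assoc, hpow]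

theorem aeval_reflection_fjPoly (ℓ n m s q : ℕ) {i j : Fin n} (hij : i ≠ j) {c d : ℂ}
    (hc : c ^ ℓ = 1) (hd : d ^ ℓ = 1) (t : Fin n) :
    aeval (fun l => if l = i then C c * X j else if l = j then C d * X i else X l)
        (fjPoly ℓ n m s q t)
      = C (d ^ fjResidue ℓ s q (Equiv.swap i j t) i * c ^ fjResidue ℓ s q (Equiv.swap i j t) j)
        * fjPoly ℓ n m s q (Equiv.swap i j t) := by
  set u : Fin n → ℂ := fun l => if l = i then d else if l = j then c else 1 with hu
  have hσ : (fun l => if l = i then C c * X j else if l = j then C d * X i else X l)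
      = (fun l => C (u l) * X l) ∘ Equiv.swap i j := by
    funext l
    rcases eq_or_ne l i with rfl | hli
    · simp [hu, hij.symm]
    rcases eq_or_ne l j with rfl | hlj
    · simp [hu, hli]
    · simp [hu, hli, hlj, Equiv.swap_apply_of_ne_of_ne hli hlj]
  have huℓ : ∀ l, u l ^ ℓ = 1 := fun l => by
    simp only [hu]
    split_ifs <;> simp [hc, hd]
  rw [hσ, ← aeval_rename, rename_fjPoly, aeval_C_mul_X_fjPoly _ _ _ _ _ _ huℓ,
    Fintype.prod_eq_mul i j hij (fun l hl => by simp [hu, hl.1, hl.2]),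
    show u i = d by simp [hu], show u j = c by simp [hu, hij.symm]]

theorem aeval_diagonal_fjPoly (ℓ n m s q : ℕ) (i : Fin n) {c : ℂ} (hc : c ^ ℓ = 1)
    (t : Fin n) :
    aeval (fun l => if l = i then C c * X i else X l) (fjPoly ℓ n m s q t)
      = C (c ^ fjResidue ℓ s q t i) * fjPoly ℓ n m s q t := by
  have hσ : (fun l => if l = i then C c * X i else X l)
      = fun l => C (if l = i then c else 1) * X l := by
    funext l
    split_ifs <;> simp [*]
  have huℓ : ∀ l, (if l = i then c else 1) ^ ℓ = 1 := fun l => by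
    split_ifs <;> simp [hc]
  rw [hσ, aeval_C_mul_X_fjPoly _ _ _ _ _ _ huℓ,
    Fintype.prod_eq_single i (fun l hl => by simp [hl]), if_pos rfl]

theorem inv_pow_sub_of_pow_eq_one {G₀ : Type*} [GroupWithZero G₀] {ω : G₀} {ℓ q : ℕ}
    (hω : ω ^ ℓ = 1) (hω0 : ω ≠ 0) (hq : q ≤ ℓ) : ω⁻¹ ^ (ℓ - q) = ω ^ q := by
  rw [inv_pow_sub₀ hω0 hq, hω, inv_one, one_mul]

theorem inv_pow_pow_sub_add_mul_pow_pow {K : Type*} [Field K] {ω : K} {ℓ q : ℕ}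
    (hω : ω ^ ℓ = 1) (hω0 : ω ≠ 0) (hq : q ≤ ℓ) (a s : ℕ) :
    (ω⁻¹ ^ a) ^ (ℓ - q + s) * (ω ^ a) ^ s = ω ^ (a * q) :=
  calc (ω⁻¹ ^ a) ^ (ℓ - q + s) * (ω ^ a) ^ s = (ω⁻¹ ^ (ℓ - q)) ^ a * (ω * ω⁻¹) ^ (a * s) := by
        ring
    _ = ω ^ (a * q) := by rw [inv_pow_sub_of_pow_eq_one hω hω0 hq, mul_inv_cancel₀ hω0]; ring

theorem stmt16_general (ℓ n m s q : ℕ) (hℓ : 2 ≤ ℓ) (ω : ℂ) (hω : IsPrimitiveRoot ω ℓ)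
    (hq2 : q ≤ ℓ - 1) (a : ℕ)
    (i j k : Fin n) (hij : i ≠ j) (hki : k ≠ i) (hkj : k ≠ j) :
    (aeval (fun l : Fin n => if l = i then C (ω ^ a) * X j
        else if l = j then C ((ω⁻¹) ^ a) * X i else X l)
        (fjPoly ℓ n m s q i) = C (ω ^ (a * q)) * fjPoly ℓ n m s q j) ∧
    (aeval (fun l : Fin n => if l = i then C (ω ^ a) * X j
        else if l = j then C ((ω⁻¹) ^ a) * X i else X l)
        (fjPoly ℓ n m s q j) = C ((ω⁻¹) ^ (a * q)) * fjPoly ℓ n m s q i) ∧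
    (aeval (fun l : Fin n => if l = i then C (ω ^ a) * X j
        else if l = j then C ((ω⁻¹) ^ a) * X i else X l)
        (fjPoly ℓ n m s q k) = fjPoly ℓ n m s q k) ∧
    (aeval (fun l : Fin n => if l = i then C ω⁻¹ * X i else X l)
        (fjPoly ℓ n m s q i) = C ((ω⁻¹) ^ s) * fjPoly ℓ n m s q i) ∧
    (aeval (fun l : Fin n => if l = i then C ω⁻¹ * X i else X l)
        (fjPoly ℓ n m s q k) = C (ω ^ ((q : ℤ) - (s : ℤ))) * fjPoly ℓ n m s q k) := by
  have hωℓ : ω ^ ℓ = 1 := hω.pow_eq_one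
  have hω0 : ω ≠ 0 := hω.ne_zero (by omega)
  have hqℓ : q ≤ ℓ := by omega
  have hω'ℓ : ω⁻¹ ^ ℓ = 1 := by rw [inv_pow, hωℓ, inv_one]
  have hωaℓ : (ω ^ a) ^ ℓ = 1 := by rw [pow_right_comm, hωℓ, one_pow]
  have hω'aℓ : (ω⁻¹ ^ a) ^ ℓ = 1 := by rw [pow_right_comm, hω'ℓ, one_pow]
  refine ⟨?_, ?_, ?_, ?_, ?_⟩
  · rw [aeval_reflection_fjPoly ℓ n m s q hij hωaℓ hω'aℓ, Equiv.swap_apply_left]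
    simp only [fjResidue, if_neg hij, if_pos]
    rw [inv_pow_pow_sub_add_mul_pow_pow hωℓ hω0 hqℓ]
  · rw [aeval_reflection_fjPoly ℓ n m s q hij hωaℓ hω'aℓ, Equiv.swap_apply_right]
    simp only [fjResidue, if_neg hij.symm, if_pos]
    have h := inv_pow_pow_sub_add_mul_pow_pow hω'ℓ (inv_ne_zero hω0) hqℓ a s
    rw [inv_inv] at h
    rw [mul_comm ((ω⁻¹ ^ a) ^ s), h]
  · rw [aeval_reflection_fjPoly ℓ n m s q hij hωaℓ hω'aℓ, Equiv.swap_apply_of_ne_of_ne hki hkj]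
    simp only [fjResidue, if_neg hki.symm, if_neg hkj.symm]
    rw [← mul_pow, ← mul_pow, inv_mul_cancel₀ hω0, one_pow, one_pow, C_1, one_mul]
  · rw [aeval_diagonal_fjPoly ℓ n m s q i hω'ℓ, fjResidue, if_pos rfl]
  · rw [aeval_diagonal_fjPoly ℓ n m s q i hω'ℓ, fjResidue, if_neg hki.symm, pow_add,
      inv_pow_sub_of_pow_eq_one hωℓ hω0 hqℓ, zpow_sub₀ hω0, zpow_natCast, zpow_natCast, inv_pow,
      div_eq_mul_inv]

/-- Action of the generators of G(ℓ,1,n) = S_n ⋉ (ℤ/ℓℤ)^n on the polynomials f_j: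
σ_{ij}^{(a)} f_i = ω^{aq} f_j, σ_{ij}^{(a)} f_j = ω^{−aq} f_i, σ_{ij}^{(a)} f_k = f_k,
s_i f_i = ω^{−s} f_i, s_i f_k = ω^{q−s} f_k (k ≠ i, j). -/
theorem stmt16 (ℓ n m s q : ℕ) (hℓ : 2 ≤ ℓ) (ω : ℂ) (hω : IsPrimitiveRoot ω ℓ)
    (hq1 : 1 ≤ q) (hq2 : q ≤ ℓ - 1) (a : ℕ)
    (i j k : Fin n) (hij : i ≠ j) (hki : k ≠ i) (hkj : k ≠ j) :
    (aeval (fun l : Fin n => if l = i then C (ω ^ a) * X j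
        else if l = j then C ((ω⁻¹) ^ a) * X i else X l)
        (fjPoly ℓ n m s q i) = C (ω ^ (a * q)) * fjPoly ℓ n m s q j) ∧
    (aeval (fun l : Fin n => if l = i then C (ω ^ a) * X j
        else if l = j then C ((ω⁻¹) ^ a) * X i else X l)
        (fjPoly ℓ n m s q j) = C ((ω⁻¹) ^ (a * q)) * fjPoly ℓ n m s q i) ∧
    (aeval (fun l : Fin n => if l = i then C (ω ^ a) * X j
        else if l = j then C ((ω⁻¹) ^ a) * X i else X l)
        (fjPoly ℓ n m s q k) = fjPoly ℓ n m s q k) ∧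
    (aeval (fun l : Fin n => if l = i then C ω⁻¹ * X i else X l)
        (fjPoly ℓ n m s q i) = C ((ω⁻¹) ^ s) * fjPoly ℓ n m s q i) ∧
    (aeval (fun l : Fin n => if l = i then C ω⁻¹ * X i else X l)
        (fjPoly ℓ n m s q k) = C (ω ^ ((q : ℤ) - (s : ℤ))) * fjPoly ℓ n m s q k) :=
  stmt16_general ℓ n m s q hℓ ω hω hq2 a i j k hij hki hkj
end
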